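/- Consider the RBB process with n bins and m balls, where m ≥ n. There exist constants c > 0 and n_0 such that for all n ≥ n_0, every load vector at some round t_0 ≥ 0 (i.e., starting the process from round t_0 in any configuration), setting t_3 := t_0 + ⌈744 · (m/n)²⌉, the probability that F_{t_0}^{t_3} ≥ m/384 is at least 1 − e^{−c·n}. -/

import Mathlib

open MeasureTheory ProbabilityTheory Finset
open scoped ENNReal

/-- The number of non-empty bins of a load vector. -/
def kappa {n : ℕ} (x : Fin n → ℕ) : ℕ := (Finset.univ.filter fun i => 0 < x i).card

/-- One round of the repeated balls-into-bins (RBB) process: one ball is removed from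
each non-empty bin and these `kappa x` balls are re-allocated according to the first
`kappa x` of the bin choices `z : Fin n → Fin n`. -/
def rbbStep {n : ℕ} (x : Fin n → ℕ) (z : Fin n → Fin n) (i : Fin n) : ℕ :=
  x i - (if 0 < x i then 1 else 0)
    + (Finset.univ.filter fun j : Fin n => (j : ℕ) < kappa x ∧ z j = i).card

/-- The RBB load vector trajectory started from the load vector `x0`. -/
def rbb {n : ℕ} (x0 : Fin n → ℕ) (Z : ℕ → Fin n → Fin n) : ℕ → Fin n → ℕ
  | 0 => x0
  | t + 1 => rbbStep (rbb x0 Z t) (Z t)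

open Real
open scoped BigOperators

/-!
With `q = m / n` and `L = 8 q`, take the potential `Ψ x = ∑ᵢ g(xᵢ)`, where `g` is the square
capped to be linear beyond `L`. In one round `𝔼 Ψ` grows by at least `3 n / 8 - 28 q F`, where `F`
is the number of empty bins, whereas always `0 ≤ Ψ ≤ 2 L m = 16 q² n`. If fewer than `m / 384`
empty (bin, round) pairs occur in `T ≈ 744 q²` rounds, the accumulated drift is nearly `279 q² n`,
so the martingale `∑ drift - ΔΨ` exceeds `262 q² n`. Redirecting a single ball changes
`Ψ` by at most `4 L`, so McDiarmid's inequality bounds each exponential moment of the martingale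
increments by `exp (s² (4 L)² n)`, and a Chernoff bound with `s = 1 / (10⁴ q²)` gives probability
`exp (-n / 60)`. The law of the i.i.d. bin choices is the uniform average over choice tuples, so
everything is carried out with finite averages `𝔼`.
-/

lemma exp_le_self_add_exp_sq (y : ℝ) : exp y ≤ y + exp (y ^ 2) := by
  have hsq : 1 + y ^ 2 ≤ exp (y ^ 2) := by linarith [add_one_le_exp (y ^ 2)]
  rcases le_or_gt |y| 1 with hy | hy
  · linarith [(abs_le.1 (abs_exp_sub_one_sub_id_le hy)).2]
  rcases lt_abs.1 hy with hy | hy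
  · linarith [exp_le_exp.2 (show y ≤ y ^ 2 by nlinarith)]
  · linarith [exp_le_one_iff.2 (show y ≤ 0 by linarith), show 0 ≤ y + y ^ 2 by nlinarith]

lemma exp_two_le : exp 2 ≤ 7.39 := by
  have h := exp_one_lt_d9
  rw [show (2 : ℝ) = 1 + 1 by norm_num, exp_add]
  nlinarith [exp_pos 1]

section Expect

variable {V : Type*} [Fintype V]

lemma expect_exp_mul_le_of_abs_le [Nonempty V] {Y : V → ℝ} {c : ℝ} (hY : ∀ v, |Y v| ≤ c)
    (hmean : 𝔼 v, Y v = 0) (t : ℝ) : 𝔼 v, exp (t * Y v) ≤ exp (t ^ 2 * c ^ 2) := by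
  have hpt : ∀ v, exp (t * Y v) ≤ t * Y v + exp (t ^ 2 * c ^ 2) := fun v => by
    have : (t * Y v) ^ 2 ≤ t ^ 2 * c ^ 2 := by
      rw [mul_pow]; exact mul_le_mul_of_nonneg_left (sq_le_sq' (abs_le.1 (hY v)).1
        (abs_le.1 (hY v)).2) (sq_nonneg t)
    linarith [exp_le_self_add_exp_sq (t * Y v), exp_le_exp.2 this]
  calc 𝔼 v, exp (t * Y v) ≤ 𝔼 v, (t * Y v + exp (t ^ 2 * c ^ 2)) :=
        expect_le_expect fun v _ => hpt v
    _ = exp (t ^ 2 * c ^ 2) := by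
        rw [expect_add_distrib, ← mul_expect, hmean, Fintype.expect_const]; ring

lemma expect_boole_le_exp_mul_expect_exp (p : V → Prop) [DecidablePred p] (M : V → ℝ)
    {a s : ℝ} (hs : 0 ≤ s) (h : ∀ v, p v → a ≤ M v) :
    𝔼 v, (if p v then 1 else 0 : ℝ) ≤ exp (-(s * a)) * 𝔼 v, exp (s * M v) := by
  rw [mul_expect]
  refine expect_le_expect fun v _ => ?_
  rw [← exp_add]
  split_ifs with hv
  · exact one_le_exp (by nlinarith [h v hv])
  · exact (exp_pos _).le

end Expect

lemma Fin.expect_cons {A : Type*} [Fintype A] {k : ℕ} (f : (Fin (k + 1) → A) → ℝ) :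
    𝔼 z, f z = 𝔼 a, 𝔼 w : Fin k → A, f (Fin.cons a w) := by
  rw [← Fintype.expect_equiv (Fin.consEquiv fun _ => A) (fun p => f (Fin.cons p.1 p.2)) f
    (fun _ => rfl), ← univ_product_univ]
  exact expect_product' univ univ fun a w => f (Fin.cons a w)

theorem mcdiarmid_expect_exp_le {A : Type*} [Fintype A] [Nonempty A] :
    ∀ {k : ℕ} (F : (Fin k → A) → ℝ) {c : ℝ},
    (∀ z j b, |F (Function.update z j b) - F z| ≤ c) → ∀ t : ℝ,
    𝔼 z, exp (t * (𝔼 z', F z' - F z)) ≤ exp (t ^ 2 * c ^ 2 * k)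
  | 0, F, c, _, t => by simp
  | k + 1, F, c, hF, t => by
    set G : A → ℝ := fun a => 𝔼 w : Fin k → A, F (Fin.cons a w)
    have hEF : 𝔼 z, F z = 𝔼 a, G a := Fin.expect_cons F
    have hG : ∀ a, |G a - 𝔼 a', G a'| ≤ c := fun a => by
      have : G a - 𝔼 a', G a' = 𝔼 a', 𝔼 w : Fin k → A, (F (Fin.cons a w) - F (Fin.cons a' w)) := by
        simp only [G, expect_sub_distrib, Fintype.expect_const]
      rw [this]
      refine (abs_expect_le _ _).trans (expect_le univ_nonempty fun a' _ =>
        (abs_expect_le _ _).trans (expect_le univ_nonempty fun w _ => ?_))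
      simpa only [Fin.update_cons_zero] using hF (Fin.cons a' w) 0 a
    have hinner : ∀ a, 𝔼 w : Fin k → A, exp (t * (G a - F (Fin.cons a w)))
        ≤ exp (t ^ 2 * c ^ 2 * k) := fun a =>
      mcdiarmid_expect_exp_le (fun w => F (Fin.cons a w))
        (fun w j b => by rw [Fin.cons_update]; exact hF _ _ _) t
    calc 𝔼 z, exp (t * (𝔼 z', F z' - F z))
        = 𝔼 a, exp (t * (𝔼 a', G a' - G a)) *
            𝔼 w : Fin k → A, exp (t * (G a - F (Fin.cons a w))) := by
          rw [Fin.expect_cons, hEF]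
          refine expect_congr rfl fun a _ => ?_
          rw [mul_expect]
          refine expect_congr rfl fun w _ => ?_
          rw [← exp_add]; ring_nf
      _ ≤ 𝔼 a, exp (t * (𝔼 a', G a' - G a)) * exp (t ^ 2 * c ^ 2 * k) :=
          expect_le_expect fun a _ => mul_le_mul_of_nonneg_left (hinner a) (exp_pos _).le
      _ ≤ exp (t ^ 2 * c ^ 2) * exp (t ^ 2 * c ^ 2 * k) := by
          rw [← expect_mul]
          refine mul_le_mul_of_nonneg_right (expect_exp_mul_le_of_abs_le (fun a => ?_) ?_ t)
            (exp_pos _).le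
          · rw [abs_sub_comm]; exact hG a
          · rw [expect_sub_distrib, Fintype.expect_const, sub_self]
      _ = exp (t ^ 2 * c ^ 2 * ↑(k + 1)) := by rw [← exp_add]; push_cast; ring_nf

section UniformHits

variable {ι B : Type*} [Fintype ι] [DecidableEq ι] [Fintype B] [Nonempty B]

lemma expect_prod_apply (S : Finset ι) (g : ι → B → ℝ) :
    𝔼 z : ι → B, ∏ j ∈ S, g j (z j) = ∏ j ∈ S, 𝔼 b, g j b := by
  have hall : ∀ g' : ι → B → ℝ, 𝔼 z : ι → B, ∏ j, g' j (z j) = ∏ j, 𝔼 b, g' j b := fun g' => by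
    simp only [Fintype.expect_eq_sum_div_card, prod_div_distrib, prod_const, card_univ,
      Fintype.card_fun, Nat.cast_pow]
    rw [prod_univ_sum (fun _ => univ) g', Fintype.piFinset_univ]
  simp_rw [← Fintype.prod_ite_mem S]
  rw [hall fun j b => if j ∈ S then g j b else 1]
  refine prod_congr rfl fun j _ => ?_
  split_ifs <;> simp

lemma expect_apply (j : ι) (f : B → ℝ) : 𝔼 z : ι → B, f (z j) = 𝔼 b, f b := by
  simpa using expect_prod_apply {j} fun _ => f

variable [DecidableEq B]

lemma expect_boole_apply_eq (j : ι) (i : B) :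
    𝔼 z : ι → B, (if z j = i then 1 else 0 : ℝ) = (Fintype.card B : ℝ)⁻¹ := by
  rw [expect_apply j fun b => if b = i then 1 else 0, Fintype.expect_eq_sum_div_card]
  simp

lemma expect_card_filter_apply_eq (S : Finset ι) (i : B) :
    𝔼 z : ι → B, ((S.filter fun j => z j = i).card : ℝ) = S.card / Fintype.card B := by
  simp_rw [natCast_card_filter]
  rw [expect_sum_comm]
  simp [expect_boole_apply_eq, div_eq_mul_inv]

lemma expect_sq_card_filter_apply_eq (S : Finset ι) (i : B) :
    𝔼 z : ι → B, ((S.filter fun j => z j = i).card : ℝ) ^ 2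
      = S.card / Fintype.card B + (S.card ^ 2 - S.card) / Fintype.card B ^ 2 := by
  set N : ℝ := (Fintype.card B : ℝ)
  have hpair : ∀ j j', 𝔼 z : ι → B, ((if z j = i then 1 else 0 : ℝ) * if z j' = i then 1 else 0)
      = N⁻¹ ^ 2 + if j = j' then N⁻¹ - N⁻¹ ^ 2 else 0 := fun j j' => by
    by_cases h : j = j'
    · subst h
      simp only [ite_zero_mul_ite_zero, and_self, mul_one, expect_boole_apply_eq, if_true]
      ring
    · have := expect_prod_apply {j, j'} fun _ b => if b = i then (1 : ℝ) else 0
      simp only [prod_pair h] at this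
      rw [this, if_neg h]
      simp [N, sq]
  simp_rw [natCast_card_filter, sq, sum_mul_sum, expect_sum_comm, hpair, sum_add_distrib,
    sum_ite_eq]
  simp only [sum_const, nsmul_eq_mul, sum_ite_mem, inter_self]
  field_simp
  ring

lemma expect_three_pow_card_filter_apply_le (S : Finset ι) (i : B) :
    𝔼 z : ι → B, (3 : ℝ) ^ (S.filter fun j => z j = i).card
      ≤ exp (2 * S.card / Fintype.card B) := by
  have hN : (0 : ℝ) < Fintype.card B := by exact_mod_cast Fintype.card_pos
  have hfactor : 𝔼 b : B, (if b = i then 3 else 1 : ℝ) = 2 / Fintype.card B + 1 := by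
    have hsplit : ∀ b : B, (if b = i then 3 else 1 : ℝ) = 1 + if b = i then 2 else 0 :=
      fun b => by split_ifs <;> norm_num
    simp_rw [Fintype.expect_eq_sum_div_card, hsplit, sum_add_distrib]
    field_simp
    simp [add_comm]
  calc 𝔼 z : ι → B, (3 : ℝ) ^ (S.filter fun j => z j = i).card
      = (2 / Fintype.card B + 1) ^ S.card := by
        simp_rw [← prod_const, prod_filter]
        rw [expect_prod_apply S fun _ b => if b = i then 3 else 1,
          prod_congr rfl fun _ _ => hfactor, prod_const]
    _ ≤ exp (2 / Fintype.card B) ^ S.card :=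
        pow_le_pow_left₀ (by positivity) (add_one_le_exp _) _
    _ = exp (2 * S.card / Fintype.card B) := by rw [← exp_nat_mul]; ring_nf

end UniformHits

lemma measure_setOf_eq_ofReal_expect {Ω ι α : Type*} [MeasurableSpace Ω] {P : Measure Ω}
    [IsProbabilityMeasure P] [Fintype ι] [DecidableEq ι] [Fintype α] [MeasurableSpace α]
    [MeasurableSingletonClass α] {Y : ι → Ω → α} (hY : ∀ i, Measurable (Y i))
    (hind : iIndepFun Y P) (hunif : ∀ i a, P {ω | Y i ω = a} = (Fintype.card α : ℝ≥0∞)⁻¹)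
    (p : (ι → α) → Prop) [DecidablePred p] :
    P {ω | p fun i => Y i ω} = ENNReal.ofReal (𝔼 v, if p v then 1 else 0) := by
  have hatom : ∀ v : ι → α,
      P {ω | (fun i => Y i ω) = v} = (Fintype.card (ι → α) : ℝ≥0∞)⁻¹ := fun v => by
    have : {ω | (fun i => Y i ω) = v} = ⋂ i ∈ (univ : Finset ι), Y i ⁻¹' {v i} := by
      ext ω; simp [funext_iff]
    rw [this, hind.measure_inter_preimage_eq_mul univ fun i _ => measurableSet_singleton _]
    simp [Set.preimage, hunif, ENNReal.inv_pow]
  have hunion : {ω | p fun i => Y i ω} = ⋃ v ∈ univ.filter p, {ω | (fun i => Y i ω) = v} := by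
    ext ω; simp
  have hcard : (0 : ℝ) < Fintype.card (ι → α) := by
    obtain ⟨ω⟩ := nonempty_of_isProbabilityMeasure P
    exact_mod_cast Fintype.card_pos_iff.2 ⟨fun i => Y i ω⟩
  rw [hunion, measure_biUnion_finset (fun v _ w _ hvw => Set.disjoint_left.2 fun ω h h' =>
      hvw (h.symm.trans h')) fun v _ => ?_]
  · rw [Fintype.expect_eq_sum_div_card, sum_boole, ENNReal.ofReal_div_of_pos hcard]
    simp [hatom, div_eq_mul_inv]
  · exact measurable_pi_lambda _ hY (measurableSet_singleton v)

section Trajectory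

variable {S A : Type*} (step : S → A → S)

def trajectory (y : S) (Z : ℕ → A) : ℕ → S
  | 0 => y
  | t + 1 => step (trajectory y Z t) (Z t)

variable {step}

lemma trajectory_succ' (y : S) (Z : ℕ → A) (t : ℕ) :
    trajectory step y Z (t + 1) = trajectory step (step y (Z 0)) (fun u => Z (u + 1)) t := by
  induction t with
  | zero => rfl
  | succ t ih => exact congrArg (step · _) ih

lemma trajectory_congr (y : S) {Z Z' : ℕ → A} {t : ℕ} (h : ∀ u < t, Z u = Z' u) :
    trajectory step y Z t = trajectory step y Z' t := by
  induction t with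
  | zero => rfl
  | succ t ih =>
    exact congrArg₂ step (ih fun u hu => h u (by omega)) (h t (by omega))

def extendTuple (a₀ : A) {T : ℕ} (w : Fin T → A) (u : ℕ) : A :=
  if h : u < T then w ⟨u, h⟩ else a₀

lemma extendTuple_cons_zero (a₀ a : A) {T : ℕ} (w : Fin T → A) :
    extendTuple a₀ (Fin.cons a w : Fin (T + 1) → A) 0 = a := rfl

lemma extendTuple_cons_succ (a₀ a : A) {T : ℕ} (w : Fin T → A) :
    (fun u => extendTuple a₀ (Fin.cons a w : Fin (T + 1) → A) (u + 1)) = extendTuple a₀ w := by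
  funext u
  by_cases hu : u < T
  · simp [extendTuple, hu]; rfl
  · simp [extendTuple, hu]

lemma trajectory_extendTuple (y : S) (a₀ : A) (Z : ℕ → A) {T t : ℕ} (ht : t ≤ T) :
    trajectory step y (extendTuple a₀ fun v : Fin T => Z v) t = trajectory step y Z t :=
  trajectory_congr y fun u hu => dif_pos (by omega)

variable [Fintype A]

noncomputable def meanIncrement (step : S → A → S) (Φ : S → ℝ) (y : S) : ℝ :=
  𝔼 a, Φ (step y a) - Φ y

/-- Azuma–Hoeffding for the martingale `∑ₜ (mean increment at Xₜ) - (Φ X_T - Φ X₀)` of a chain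
driven by i.i.d. uniform inputs, given a bound `exp σ` on the exponential moment of one increment. -/
theorem expect_exp_mul_sum_meanIncrement_le [Nonempty A] (Φ : S → ℝ) (a₀ : A) {s σ : ℝ}
    (hstep : ∀ y, 𝔼 a, exp (s * (𝔼 b, Φ (step y b) - Φ (step y a))) ≤ exp σ) :
    ∀ (T : ℕ) (y : S), 𝔼 w : Fin T → A,
      exp (s * (∑ t ∈ range T, meanIncrement step Φ (trajectory step y (extendTuple a₀ w) t)
        - (Φ (trajectory step y (extendTuple a₀ w) T) - Φ y))) ≤ exp (T * σ)
  | 0, y => by simp [trajectory]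
  | T + 1, y => by
    rw [Fin.expect_cons]
    calc _ = 𝔼 a, exp (s * (𝔼 b, Φ (step y b) - Φ (step y a))) * 𝔼 w : Fin T → A,
          exp (s * (∑ t ∈ range T, meanIncrement step Φ
              (trajectory step (step y a) (extendTuple a₀ w) t)
            - (Φ (trajectory step (step y a) (extendTuple a₀ w) T) - Φ (step y a)))) := by
          refine expect_congr rfl fun a _ => ?_
          rw [mul_expect]
          refine expect_congr rfl fun w _ => ?_
          simp only [sum_range_succ', trajectory_succ', extendTuple_cons_zero,
            extendTuple_cons_succ]
          rw [← exp_add, meanIncrement, trajectory]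
          ring_nf
      _ ≤ 𝔼 a, exp (s * (𝔼 b, Φ (step y b) - Φ (step y a))) * exp (T * σ) :=
          expect_le_expect fun a _ => mul_le_mul_of_nonneg_left
            (expect_exp_mul_sum_meanIncrement_le Φ a₀ hstep T _) (exp_pos _).le
      _ ≤ exp σ * exp (T * σ) := by
          rw [← expect_mul]; exact mul_le_mul_of_nonneg_right (hstep y) (exp_pos _).le
      _ = exp (↑(T + 1) * σ) := by rw [← exp_add]; push_cast; ring_nf

end Trajectory

/-- `y ^ 2` up to `L`, continued by its tangent line `2 * L * y - L ^ 2` beyond `L`. -/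
noncomputable def cappedSq (L y : ℝ) : ℝ := y ^ 2 - max (y - L) 0 ^ 2

section CappedSq

variable {L y : ℝ}

lemma cappedSq_of_le (hyL : y ≤ L) : cappedSq L y = y ^ 2 := by
  simp [cappedSq, max_eq_right (sub_nonpos.2 hyL)]

lemma cappedSq_nonneg (hL : 0 ≤ L) (hy : 0 ≤ y) : 0 ≤ cappedSq L y := by
  unfold cappedSq
  rcases max_cases (y - L) 0 with ⟨h, h'⟩ | ⟨h, h'⟩ <;> rw [h] <;> nlinarith

lemma cappedSq_le (hL : 0 ≤ L) (hy : 0 ≤ y) : cappedSq L y ≤ 2 * L * y := by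
  unfold cappedSq
  rcases max_cases (y - L) 0 with ⟨h, h'⟩ | ⟨h, h'⟩ <;> rw [h] <;> nlinarith

lemma cappedSq_add_mul_sub_le (a b : ℝ) :
    cappedSq L a + 2 * min a L * (b - a) ≤ cappedSq L b := by
  unfold cappedSq
  rcases max_cases (a - L) 0 with ⟨ha, ha'⟩ | ⟨ha, ha'⟩ <;>
    rcases max_cases (b - L) 0 with ⟨hb, hb'⟩ | ⟨hb, hb'⟩ <;>
    rcases min_cases a L with ⟨hm, hm'⟩ | ⟨hm, hm'⟩ <;>
    rw [ha, hb, hm] <;> nlinarith [sq_nonneg (b - a)]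

lemma abs_cappedSq_sub_le {a b : ℝ} (hL : 0 ≤ L) (ha : 0 ≤ a) (hb : 0 ≤ b) :
    |cappedSq L a - cappedSq L b| ≤ 2 * L * |a - b| := by
  have hab := cappedSq_add_mul_sub_le (L := L) a b
  have hba := cappedSq_add_mul_sub_le (L := L) b a
  have ha' : 0 ≤ min a L := le_min ha hL
  have hb' : 0 ≤ min b L := le_min hb hL
  have := min_le_right a L
  have := min_le_right b L
  rcases le_total a b with h | h
  · rw [abs_of_nonpos (sub_nonpos.2 h), abs_le]; constructor <;> nlinarith
  · rw [abs_of_nonneg (sub_nonneg.2 h), abs_le]; constructor <;> nlinarith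

lemma cappedSq_add_le_expect {V : Type*} [Fintype V] [Nonempty V] (a : ℝ) (f : V → ℝ) :
    cappedSq L (a + 𝔼 v, f v) ≤ 𝔼 v, cappedSq L (a + f v) := by
  calc cappedSq L (a + 𝔼 v, f v)
      = 𝔼 v, (cappedSq L (a + 𝔼 v, f v) + 2 * min (a + 𝔼 v, f v) L * (f v - 𝔼 v, f v)) := by
        rw [expect_add_distrib, ← mul_expect, expect_sub_distrib, Fintype.expect_const,
          Fintype.expect_const]
        ring
    _ ≤ 𝔼 v, cappedSq L (a + f v) := expect_le_expect fun v _ => by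
        simpa using cappedSq_add_mul_sub_le (L := L) (a + 𝔼 v, f v) (a + f v)

lemma sq_le_three_pow (k : ℕ) : k ^ 2 ≤ 3 ^ k := by
  induction k with
  | zero => norm_num
  | succ k ih =>
    have : k < 3 ^ k := Nat.lt_pow_self (by norm_num)
    have := pow_succ 3 k
    nlinarith

/-- The cap costs at most `3 ^ k / 243` once `y` exceeds `L` by less than `k - 5`; with `k` the
number of arrivals into a bin this has mean `O(1)`. -/
lemma sq_sub_three_pow_le_cappedSq {k : ℕ} (hy : y - L ≤ k - 5) :
    y ^ 2 - 3 ^ k / 243 ≤ cappedSq L y := by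
  suffices max (y - L) 0 ^ 2 ≤ 3 ^ k / 243 by unfold cappedSq; linarith
  rcases lt_or_ge k 5 with hk | hk
  · rw [max_eq_right (by linarith [show (k : ℝ) < 5 by exact_mod_cast hk])]
    norm_num; positivity
  · obtain ⟨j, rfl⟩ := Nat.exists_eq_add_of_le hk
    have hj : ((j ^ 2 : ℕ) : ℝ) ≤ (3 ^ j : ℕ) := by exact_mod_cast sq_le_three_pow j
    push_cast at hy hj
    calc max (y - L) 0 ^ 2 ≤ (j : ℝ) ^ 2 :=
          pow_le_pow_left₀ (le_max_right _ _) (max_le (by linarith) (by positivity)) 2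
      _ ≤ 3 ^ j := hj
      _ = 3 ^ (5 + j) / 243 := by rw [pow_add]; norm_num

end CappedSq

section RBB

variable {n : ℕ}

def thrownBalls (x : Fin n → ℕ) : Finset (Fin n) := univ.filter fun j => (j : ℕ) < kappa x

lemma kappa_le (x : Fin n → ℕ) : kappa x ≤ n :=
  (card_filter_le _ _).trans_eq (card_fin n)

lemma card_thrownBalls (x : Fin n → ℕ) : (thrownBalls x).card = kappa x := by
  rw [thrownBalls, Fin.card_filter_val_lt, min_eq_right (kappa_le x)]

lemma rbbStep_eq (x : Fin n → ℕ) (z : Fin n → Fin n) (i : Fin n) :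
    rbbStep x z i = x i - (if 0 < x i then 1 else 0)
      + ((thrownBalls x).filter fun j => z j = i).card := by
  rw [rbbStep, thrownBalls, filter_filter]

lemma rbbStep_cast_of_pos {x : Fin n → ℕ} {i : Fin n} (hi : 0 < x i) (z : Fin n → Fin n) :
    (rbbStep x z i : ℝ) = (x i - 1 : ℝ) + ((thrownBalls x).filter fun j => z j = i).card := by
  rw [rbbStep_eq, if_pos hi, Nat.cast_add, Nat.cast_sub hi, Nat.cast_one]

lemma sum_rbbStep (x : Fin n → ℕ) (z : Fin n → Fin n) : ∑ i, rbbStep x z i = ∑ i, x i := by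
  have hthrown : ∑ i, ((thrownBalls x).filter fun j => z j = i).card = kappa x := by
    rw [← card_eq_sum_card_fiberwise fun j _ => mem_univ (z j), card_thrownBalls]
  have hle : ∀ i, (if 0 < x i then 1 else 0) ≤ x i := fun i => by split_ifs <;> omega
  have hkappa : kappa x = ∑ i, (if 0 < x i then 1 else 0) := by rw [kappa, card_filter]
  simp_rw [rbbStep_eq]
  rw [sum_add_distrib, hthrown, sum_tsub_distrib _ fun i _ => hle i, ← hkappa]
  have : kappa x ≤ ∑ i, x i := hkappa ▸ sum_le_sum fun i _ => hle i
  omega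

lemma rbb_eq_trajectory (x0 : Fin n → ℕ) (Z : ℕ → Fin n → Fin n) :
    rbb x0 Z = trajectory rbbStep x0 Z := by
  funext t
  induction t with
  | zero => rfl
  | succ t ih => rw [rbb, ih, trajectory]

lemma sum_rbb (x0 : Fin n → ℕ) (Z : ℕ → Fin n → Fin n) (t : ℕ) :
    ∑ i, rbb x0 Z t i = ∑ i, x0 i := by
  induction t with
  | zero => rfl
  | succ t ih => rw [rbb, sum_rbbStep, ih]

end RBB

noncomputable def rbbPotential {n : ℕ} (L : ℝ) (x : Fin n → ℕ) : ℝ := ∑ i, cappedSq L (x i)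

lemma abs_card_filter_update_sub_le {ι B : Type*} [DecidableEq ι] [DecidableEq B]
    (S : Finset ι) (z : ι → B) (j : ι) (b i : B) :
    |((S.filter fun k => Function.update z j b k = i).card : ℝ)
        - (S.filter fun k => z k = i).card|
      ≤ (if b = i then 1 else 0) + (if z j = i then 1 else 0) := by
  simp_rw [natCast_card_filter, ← sum_sub_distrib]
  have hoff : ∀ k ≠ j, ((if Function.update z j b k = i then 1 else 0 : ℝ)
      - if z k = i then 1 else 0) = 0 := fun k hk => by rw [Function.update_of_ne hk, sub_self]
  by_cases hj : j ∈ S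
  · rw [sum_eq_single_of_mem j hj fun k _ hk => hoff k hk, Function.update_self]
    split_ifs <;> norm_num
  · rw [sum_eq_zero fun k hk => hoff k (ne_of_mem_of_not_mem hk hj), abs_zero]
    positivity

section RBBPotential

variable {n : ℕ} {L : ℝ}

lemma rbbPotential_nonneg (hL : 0 ≤ L) (x : Fin n → ℕ) : 0 ≤ rbbPotential L x :=
  sum_nonneg fun _ _ => cappedSq_nonneg hL (Nat.cast_nonneg _)

lemma rbbPotential_le (hL : 0 ≤ L) (x : Fin n → ℕ) :
    rbbPotential L x ≤ 2 * L * ∑ i, (x i : ℝ) := by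
  rw [mul_sum]
  exact sum_le_sum fun i _ => cappedSq_le hL (Nat.cast_nonneg _)

lemma abs_rbbPotential_rbbStep_update_sub_le (hL : 0 ≤ L) (x : Fin n → ℕ)
    (z : Fin n → Fin n) (j b : Fin n) :
    |rbbPotential L (rbbStep x (Function.update z j b)) - rbbPotential L (rbbStep x z)|
      ≤ 4 * L := by
  have hbin : ∀ i, |cappedSq L (rbbStep x (Function.update z j b) i)
      - cappedSq L (rbbStep x z i)|
      ≤ 2 * L * ((if b = i then 1 else 0) + (if z j = i then 1 else 0)) := fun i => by
    refine (abs_cappedSq_sub_le hL (Nat.cast_nonneg _) (Nat.cast_nonneg _)).trans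
      (mul_le_mul_of_nonneg_left ?_ (by positivity))
    simp only [rbbStep_eq, Nat.cast_add, add_sub_add_left_eq_sub]
    exact abs_card_filter_update_sub_le _ z j b i
  calc _ ≤ ∑ i, |cappedSq L (rbbStep x (Function.update z j b) i)
          - cappedSq L (rbbStep x z i)| := by
        rw [rbbPotential, rbbPotential, ← sum_sub_distrib]; exact abs_sum_le_sum_abs _ _
    _ ≤ ∑ i, 2 * L * ((if b = i then 1 else 0) + (if z j = i then 1 else 0)) :=
        sum_le_sum fun i _ => hbin i
    _ = 4 * L := by rw [← mul_sum, sum_add_distrib]; simp; ring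

end RBBPotential

lemma kappa_sub_le_card_filter {n : ℕ} {x : Fin n → ℕ} {q : ℝ} (hq : 0 < q)
    (hx : ∑ i, (x i : ℝ) ≤ q * n) :
    (kappa x : ℝ) - n / 4 ≤ (univ.filter fun i => 0 < x i ∧ (x i : ℝ) ≤ 4 * q).card := by
  set high := univ.filter fun i => 4 * q < x i
  have hcover : kappa x ≤ (univ.filter fun i => 0 < x i ∧ (x i : ℝ) ≤ 4 * q).card + high.card :=
    (card_le_card fun i => by simp only [mem_filter, mem_union, high]; grind).trans
      (card_union_le _ _)
  have hmarkov : high.card * (4 * q) ≤ q * n :=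
    calc high.card * (4 * q) ≤ ∑ i ∈ high, (x i : ℝ) := by
          rw [← nsmul_eq_mul]; exact card_nsmul_le_sum _ _ _ fun i hi => (mem_filter.1 hi).2.le
      _ ≤ ∑ i, (x i : ℝ) :=
          sum_le_sum_of_subset_of_nonneg (subset_univ _) fun _ _ _ => by positivity
      _ ≤ q * n := hx
  have : (high.card : ℝ) ≤ n / 4 := by nlinarith
  have : (kappa x : ℝ) ≤ (univ.filter fun i => 0 < x i ∧ (x i : ℝ) ≤ 4 * q).card + high.card := by
    exact_mod_cast hcover
  linarith

section Drift

variable {n : ℕ} [NeZero n]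

lemma expect_card_filter_thrownBalls (x : Fin n → ℕ) (i : Fin n) :
    𝔼 z : Fin n → Fin n, (((thrownBalls x).filter fun j => z j = i).card : ℝ) = kappa x / n := by
  rw [expect_card_filter_apply_eq, card_thrownBalls, Fintype.card_fin]

lemma cappedSq_sub_le_expect_cappedSq_rbbStep {L : ℝ} (hL : 0 ≤ L) {x : Fin n → ℕ} {i : Fin n}
    (hi : 0 < x i) :
    cappedSq L (x i) - 2 * L * (1 - kappa x / n) ≤ 𝔼 z, cappedSq L (rbbStep x z i) := by
  have hρ : (kappa x : ℝ) / n ≤ 1 :=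
    div_le_one_of_le₀ (by exact_mod_cast kappa_le x) (Nat.cast_nonneg n)
  have hxi : (1 : ℝ) ≤ x i := by exact_mod_cast hi
  have hlip := abs_cappedSq_sub_le hL (by positivity : (0 : ℝ) ≤ x i)
    (by positivity : (0 : ℝ) ≤ (x i - 1 : ℝ) + kappa x / n)
  have hjensen := cappedSq_add_le_expect (L := L) ((x i : ℝ) - 1)
    fun z : Fin n → Fin n => (((thrownBalls x).filter fun j => z j = i).card : ℝ)
  rw [expect_card_filter_thrownBalls] at hjensen
  simp_rw [rbbStep_cast_of_pos hi]
  rw [show (x i : ℝ) - (x i - 1 + kappa x / n) = 1 - kappa x / n by ring,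
    abs_of_nonneg (sub_nonneg.2 hρ)] at hlip
  linarith [(abs_le.1 hlip).2]

lemma sq_add_sub_le_expect_cappedSq_rbbStep (hn : 1000 ≤ n) {q : ℝ} (hq : 1 ≤ q)
    {x : Fin n → ℕ} {i : Fin n} (hi : 0 < x i) (hlow : (x i : ℝ) ≤ 4 * q) :
    (x i : ℝ) ^ 2 + 0.95 - 9 * q * (1 - kappa x / n) ≤ 𝔼 z, cappedSq (8 * q) (rbbStep x z i) := by
  set c : ℝ := x i - 1
  set ρ : ℝ := kappa x / n
  set B : (Fin n → Fin n) → ℕ := fun z => ((thrownBalls x).filter fun j => z j = i).card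
  have hn0 : (1000 : ℝ) ≤ n := by exact_mod_cast hn
  have hκ : (kappa x : ℝ) ≤ n := by exact_mod_cast kappa_le x
  have hρ0 : 0 ≤ ρ := by positivity
  have hρ1 : ρ ≤ 1 := div_le_one_of_le₀ hκ (Nat.cast_nonneg n)
  have hc0 : 0 ≤ c := by simp only [c]; linarith [show (1 : ℝ) ≤ x i by exact_mod_cast hi]
  have hpt : ∀ z, c ^ 2 + 2 * c * (B z : ℝ) + (B z : ℝ) ^ 2 - (1 / 243) * 3 ^ B z
      ≤ cappedSq (8 * q) (rbbStep x z i) := fun z => by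
    rw [rbbStep_cast_of_pos hi]
    have := sq_sub_three_pow_le_cappedSq (L := 8 * q) (y := c + B z) (k := B z) (by linarith)
    linarith
  have hmean : 𝔼 z, (B z : ℝ) = ρ := expect_card_filter_thrownBalls x i
  have hsecond : 𝔼 z, (B z : ℝ) ^ 2 = ρ + ρ ^ 2 - ρ / n := by
    simp only [B, expect_sq_card_filter_apply_eq, card_thrownBalls, Fintype.card_fin, ρ]
    field_simp
    ring
  have hthree : 𝔼 z, (3 : ℝ) ^ B z ≤ 7.39 := by
    refine (expect_three_pow_card_filter_apply_le _ i).trans ((exp_le_exp.2 ?_).trans exp_two_le)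
    rw [card_thrownBalls, Fintype.card_fin, mul_div_assoc]
    linarith
  have hsmall : ρ / n ≤ 1 / 1000 := div_le_div₀ zero_le_one hρ1 (by norm_num) hn0
  have hexp := expect_le_expect (s := univ) fun z _ => hpt z
  rw [expect_sub_distrib, expect_add_distrib, expect_add_distrib, Fintype.expect_const,
    ← mul_expect, ← mul_expect, hmean, hsecond] at hexp
  have hxi : (x i : ℝ) = c + 1 := by ring
  rw [hxi]
  nlinarith [mul_nonneg (sub_nonneg.2 hρ1) (show 0 ≤ 9 * q - 2 * c - 3 by linarith)]

/-- A bin receives `κ / n = 1 - F / n` balls on average, so a non-empty bin loses at most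
`2 L F / n` in expectation, while each of the at least `3 n / 4 - F` non-empty bins of load at most
`4 q` (Markov) gains about one unit from the variance of its arrivals. -/
theorem le_meanIncrement_rbbPotential (hn : 1000 ≤ n) {q : ℝ} (hq : 1 ≤ q) {x : Fin n → ℕ}
    (hx : ∑ i, (x i : ℝ) ≤ q * n) :
    3 * n / 8 - 28 * q * (n - kappa x) ≤ meanIncrement rbbStep (rbbPotential (8 * q)) x := by
  set ρ : ℝ := kappa x / n
  set low := univ.filter fun i => 0 < x i ∧ (x i : ℝ) ≤ 4 * q
  have hn0 : (0 : ℝ) < n := by exact_mod_cast NeZero.pos n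
  have hρ0 : 0 ≤ ρ := by positivity
  have hρ1 : ρ ≤ 1 := div_le_one_of_le₀ (by exact_mod_cast kappa_le x) hn0.le
  have hbin : ∀ i, cappedSq (8 * q) (x i) + (-(16 * q * (1 - ρ))
      + if i ∈ low then 0.95 + 7 * q * (1 - ρ) else 0)
      ≤ 𝔼 z, cappedSq (8 * q) (rbbStep x z i) := fun i => by
    by_cases hlow : i ∈ low
    · obtain ⟨hi, hle⟩ := (mem_filter.1 hlow).2
      rw [if_pos hlow, cappedSq_of_le (by linarith)]
      linarith [sq_add_sub_le_expect_cappedSq_rbbStep hn hq hi hle]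
    rw [if_neg hlow]
    by_cases hi : 0 < x i
    · linarith [cappedSq_sub_le_expect_cappedSq_rbbStep (L := 8 * q) (by linarith) hi]
    · rw [Nat.eq_zero_of_not_pos hi, Nat.cast_zero, cappedSq_of_le (by linarith)]
      have := expect_nonneg (s := univ) fun z _ =>
        cappedSq_nonneg (L := 8 * q) (by linarith) (Nat.cast_nonneg (rbbStep x z i))
      nlinarith
  have hincr : meanIncrement rbbStep (rbbPotential (8 * q)) x
      = ∑ i, (𝔼 z, cappedSq (8 * q) (rbbStep x z i) - cappedSq (8 * q) (x i)) := by
    rw [meanIncrement, rbbPotential, sum_sub_distrib]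
    simp only [rbbPotential, expect_sum_comm]
  have hcount := kappa_sub_le_card_filter (by linarith) hx
  have hκ : (kappa x : ℝ) = ρ * n := (div_mul_cancel₀ _ hn0.ne').symm
  calc 3 * n / 8 - 28 * q * (n - kappa x)
      ≤ ∑ i, (-(16 * q * (1 - ρ)) + if i ∈ low then 0.95 + 7 * q * (1 - ρ) else 0) := by
        simp only [sum_add_distrib, sum_ite_mem, univ_inter, sum_const, card_univ,
          Fintype.card_fin, nsmul_eq_mul]
        rw [hκ] at hcount ⊢
        nlinarith [mul_le_mul_of_nonneg_right hcount
          (show 0 ≤ 0.95 + 7 * q * (1 - ρ) by nlinarith),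
          mul_nonneg (mul_nonneg hn0.le (by linarith : (0 : ℝ) ≤ q))
            (mul_nonneg hρ0 (sub_nonneg.2 hρ1)),
          mul_nonneg hn0.le (sub_nonneg.2 hρ1)]
    _ ≤ meanIncrement rbbStep (rbbPotential (8 * q)) x := by
        rw [hincr]; exact sum_le_sum fun i _ => by linarith [hbin i]

end Drift

section Concentration

variable {n : ℕ}

/-- `F₀ᵀ`: the number of (empty bin, round) pairs in rounds `0, …, T`. -/
noncomputable def emptyBinRounds (x0 : Fin n → ℕ) (Z : ℕ → Fin n → Fin n) (T : ℕ) : ℝ :=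
  ∑ u ∈ range (T + 1), ((n : ℝ) - kappa (rbb x0 Z u))

variable [NeZero n]

lemma le_sum_meanIncrement_sub_of_emptyBinRounds_le (hn : 1000 ≤ n) {q : ℝ} (hq : 1 ≤ q)
    {x0 : Fin n → ℕ} (hx0 : ∑ i, (x0 i : ℝ) = q * n) (Z : ℕ → Fin n → Fin n) {T : ℕ}
    (hT : 744 * q ^ 2 ≤ T) (hfew : emptyBinRounds x0 Z T ≤ q * n / 384) :
    262 * q ^ 2 * n ≤ ∑ t ∈ range T, meanIncrement rbbStep (rbbPotential (8 * q)) (rbb x0 Z t)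
      - (rbbPotential (8 * q) (rbb x0 Z T) - rbbPotential (8 * q) x0) := by
  have hload : ∀ t, ∑ i, (rbb x0 Z t i : ℝ) = q * n := fun t => by
    rw [← hx0]; exact_mod_cast sum_rbb x0 Z t
  have hlast : (kappa (rbb x0 Z T) : ℝ) ≤ n := by exact_mod_cast kappa_le _
  rw [emptyBinRounds, sum_range_succ] at hfew
  have hdrift : 3 * n / 8 * T - 28 * q * (q * n / 384)
      ≤ ∑ t ∈ range T, meanIncrement rbbStep (rbbPotential (8 * q)) (rbb x0 Z t) :=
    calc 3 * n / 8 * T - 28 * q * (q * n / 384)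
        ≤ ∑ t ∈ range T, (3 * n / 8 - 28 * q * (n - kappa (rbb x0 Z t))) := by
          rw [sum_sub_distrib, ← mul_sum, sum_const, card_range, nsmul_eq_mul]
          nlinarith
      _ ≤ _ := sum_le_sum fun t _ => le_meanIncrement_rbbPotential hn hq (hload t).le
  have hfinal := rbbPotential_le (L := 8 * q) (by linarith) (rbb x0 Z T)
  rw [hload] at hfinal
  have hinitial := rbbPotential_nonneg (L := 8 * q) (by linarith) x0
  have hn0 : (0 : ℝ) < n := by exact_mod_cast NeZero.pos n
  nlinarith [mul_le_mul_of_nonneg_left hT (by positivity : (0 : ℝ) ≤ 3 * n / 8)]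

theorem expect_boole_emptyBinRounds_lt_le (hn : 1000 ≤ n) {m : ℕ} (hm : n ≤ m)
    {x0 : Fin n → ℕ} (hx0 : ∑ i, x0 i = m) :
    𝔼 w : Fin ⌈(744 : ℝ) * ((m : ℝ) / n) ^ 2⌉₊ → Fin n → Fin n,
      (if emptyBinRounds x0 (extendTuple id w) ⌈(744 : ℝ) * ((m : ℝ) / n) ^ 2⌉₊ < m / 384
        then 1 else 0 : ℝ) ≤ exp (-(1 / 60) * n) := by
  set q : ℝ := m / n
  set T := ⌈744 * q ^ 2⌉₊
  set s : ℝ := 1 / (10000 * q ^ 2)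
  set Φ := rbbPotential (n := n) (8 * q)
  have hn0 : (1000 : ℝ) ≤ n := by exact_mod_cast hn
  have hq : 1 ≤ q := (one_le_div (by linarith)).2 (by exact_mod_cast hm)
  have hqn : (m : ℝ) = q * n := (div_mul_cancel₀ _ (by positivity)).symm
  have hT : 744 * q ^ 2 ≤ T := Nat.le_ceil _
  have hT' : (T : ℝ) ≤ 745 * q ^ 2 :=
    (Nat.ceil_lt_add_one (by positivity)).le.trans (by nlinarith)
  have hbad := expect_boole_le_exp_mul_expect_exp (s := s)
    (fun w : Fin T → Fin n → Fin n => emptyBinRounds x0 (extendTuple id w) T < m / 384)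
    (fun w => ∑ t ∈ range T, meanIncrement rbbStep Φ (rbb x0 (extendTuple id w) t)
      - (Φ (rbb x0 (extendTuple id w) T) - Φ x0)) (by positivity) fun w hw =>
    le_sum_meanIncrement_sub_of_emptyBinRounds_le hn hq (by rw [← hqn]; exact_mod_cast hx0) _ hT
      (by rw [← hqn]; exact hw.le)
  have hmgf := expect_exp_mul_sum_meanIncrement_le Φ id (fun y => mcdiarmid_expect_exp_le _
    (fun z j b => abs_rbbPotential_rbbStep_update_sub_le (by linarith) y z j b) s) T x0
  simp only [← rbb_eq_trajectory] at hmgf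
  have hexponent :
      -(s * (262 * q ^ 2 * n)) + T * (s ^ 2 * (4 * (8 * q)) ^ 2 * n) ≤ -(1 / 60) * n := by
    have hdecay : s * (262 * q ^ 2 * n) = 262 / 10000 * n := by simp only [s]; field_simp
    have hgrowth : T * (s ^ 2 * (4 * (8 * q)) ^ 2 * n) ≤ 745 * 1024 / 10 ^ 8 * n :=
      calc T * (s ^ 2 * (4 * (8 * q)) ^ 2 * n)
          ≤ 745 * q ^ 2 * (s ^ 2 * (4 * (8 * q)) ^ 2 * n) :=
            mul_le_mul_of_nonneg_right hT' (by positivity)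
        _ = 745 * 1024 / 10 ^ 8 * n := by simp only [s]; field_simp; ring
    linarith
  calc _ ≤ _ := hbad
    _ ≤ exp (-(s * (262 * q ^ 2 * n))) * exp (T * (s ^ 2 * (4 * (8 * q)) ^ 2 * n)) :=
        mul_le_mul_of_nonneg_left hmgf (exp_pos _).le
    _ ≤ exp (-(1 / 60) * n) := by rw [← exp_add]; exact exp_le_exp.2 hexponent

theorem one_sub_exp_le_expect_boole_le_emptyBinRounds (hn : 1000 ≤ n) {m : ℕ} (hm : n ≤ m)
    {x0 : Fin n → ℕ} (hx0 : ∑ i, x0 i = m) :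
    1 - exp (-(1 / 60) * n) ≤ 𝔼 w : Fin ⌈(744 : ℝ) * ((m : ℝ) / n) ^ 2⌉₊ → Fin n → Fin n,
      if m / 384 ≤ emptyBinRounds x0 (extendTuple id w) ⌈(744 : ℝ) * ((m : ℝ) / n) ^ 2⌉₊
        then 1 else 0 := by
  have hcompl : ∀ w : Fin ⌈(744 : ℝ) * ((m : ℝ) / n) ^ 2⌉₊ → Fin n → Fin n,
      (if m / 384 ≤ emptyBinRounds x0 (extendTuple id w) ⌈(744 : ℝ) * ((m : ℝ) / n) ^ 2⌉₊
        then 1 else 0 : ℝ)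
      = 1 - if emptyBinRounds x0 (extendTuple id w) ⌈(744 : ℝ) * ((m : ℝ) / n) ^ 2⌉₊ < m / 384
        then 1 else 0 := fun w => by
    split_ifs <;> norm_num <;> linarith
  simp_rw [hcompl]
  rw [expect_sub_distrib, Fintype.expect_const]
  linarith [expect_boole_emptyBinRounds_lt_le hn hm hx0]

end Concentration

lemma sum_Icc_sub_eq_sum_range {M : Type*} [AddCommMonoid M] (f : ℕ → M) (a T : ℕ) :
    ∑ t ∈ Icc a (a + T), f (t - a) = ∑ u ∈ range (T + 1), f u := by
  rw [← Ico_add_one_right_eq_Icc, sum_Ico_eq_sum_range, show a + T + 1 - a = T + 1 by omega]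
  simp

/-- **Lemma 4.3 (many empty bins).** For the RBB process with `m ≥ n` balls, started at
round `t₀` from an arbitrary configuration, with `t₃ := t₀ + ⌈744·(m/n)²⌉`, there are
constants `c > 0` and `n₀` such that for all `n ≥ n₀`, with probability at least
`1 - e^{-c·n}` the total number of empty bin/round pairs in `[t₀, t₃]` is at least
`m/384`. -/
theorem rbb_many_empty_bins :
    ∃ c : ℝ, 0 < c ∧ ∃ n0 : ℕ, ∀ n : ℕ, n0 ≤ n → ∀ m : ℕ, n ≤ m →
    ∀ (Ω : Type) [inst : MeasurableSpace Ω] (P : Measure Ω) [IsProbabilityMeasure P]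
      (Z : ℕ → Fin n → Ω → Fin n),
      (∀ t j, Measurable (Z t j)) →
      iIndepFun (fun (p : ℕ × Fin n) ω => Z p.1 p.2 ω) P →
      (∀ t j i, P {ω | Z t j ω = i} = (n : ℝ≥0∞)⁻¹) →
    ∀ t0 : ℕ, ∀ x0 : Fin n → ℕ, (∑ i, x0 i) = m →
      (let t3 : ℕ := t0 + ⌈(744 : ℝ) * ((m : ℝ) / n) ^ 2⌉₊
       P {ω | ((m : ℝ) / 384) ≤
            ((∑ t ∈ Finset.Icc t0 t3,
                (n - kappa (rbb x0 (fun u j => Z (t0 + u) j ω) (t - t0)))) : ℝ)}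
         ≥ ENNReal.ofReal (1 - Real.exp (-c * n))) := by
  refine ⟨1 / 60, by norm_num, 1000, fun n hn m hm Ω _ P _ Z hZ hind hunif t0 x0 hx0 => ?_⟩
  have : NeZero n := ⟨by omega⟩
  set T := ⌈(744 : ℝ) * ((m : ℝ) / n) ^ 2⌉₊
  have hY : iIndepFun (fun (p : Fin T × Fin n) => Z (t0 + p.1) p.2) P :=
    hind.precomp (g := fun p : Fin T × Fin n => (t0 + (p.1 : ℕ), p.2)) fun p p' h => by
      simp only [Prod.mk.injEq, add_right_inj] at h; exact Prod.ext (Fin.ext h.1) h.2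
  have hevent : ∀ ω, ∑ t ∈ Icc t0 (t0 + T),
      ((n : ℝ) - kappa (rbb x0 (fun u j => Z (t0 + u) j ω) (t - t0)))
      = emptyBinRounds x0 (extendTuple id (Function.curry fun p => Z (t0 + p.1) p.2 ω)) T :=
      fun ω => by
    rw [sum_Icc_sub_eq_sum_range (fun u => (n : ℝ) - kappa (rbb x0 _ u)), emptyBinRounds]
    refine sum_congr rfl fun u hu => ?_
    rw [rbb_eq_trajectory, rbb_eq_trajectory, ← trajectory_extendTuple x0 id
      (fun u j => Z (t0 + u) j ω) (Nat.lt_succ_iff.1 (mem_range.1 hu))]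
    rfl
  simp only [ge_iff_le, hevent]
  rw [measure_setOf_eq_ofReal_expect (fun p => hZ _ _) hY
    (by simpa using fun p : Fin T × Fin n => hunif (t0 + p.1) p.2)
    fun v => (m : ℝ) / 384 ≤ emptyBinRounds x0 (extendTuple id (Function.curry v)) T]
  refine ENNReal.ofReal_le_ofReal
    ((one_sub_exp_le_expect_boole_le_emptyBinRounds hn hm hx0).trans_eq ?_)
  exact (Fintype.expect_equiv (Equiv.curry _ _ _) _ _ fun v => rfl).symm
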